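/- With the same setup, |p_s(x,y)| ≤ (|s|/Re s) · p̃_s(x,y), where p̃_s(x,y) = Re ρ_s(x,y) / Σ_z Re ρ_s(x,z) defines a stochastic transition kernel with positive entries on edges. -/

import Mathlib

/-!
For `k ≥ 0` the sector `{u : ‖u‖ ≤ k * Re u}` is a convex cone that is closed under inversion,
since `‖u⁻¹‖ = ‖u‖⁻¹` and `Re u⁻¹ = Re u / ‖u‖²`. For `k = ‖s‖ / Re s` it contains `1`, `s` and
hence `s⁻¹`, so it contains `L s + R + D s⁻¹` and its inverse `ρ = s / (L s² + R s + D)`.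
Summing, `Re ∑ ρ = ∑ Re ρ ≤ ‖∑ ρ‖`, which bounds the denominator of `p_s` from below.
-/

open Finset Complex

def sector (k : ℝ) : Set ℂ := {u | ‖u‖ ≤ k * u.re}

section sector

variable {k : ℝ} {u v : ℂ}

theorem mem_sector : u ∈ sector k ↔ ‖u‖ ≤ k * u.re := Iff.rfl

theorem add_mem_sector (hu : u ∈ sector k) (hv : v ∈ sector k) : u + v ∈ sector k :=
  calc ‖u + v‖ ≤ ‖u‖ + ‖v‖ := norm_add_le u v
    _ ≤ k * (u + v).re := by rw [add_re, mul_add]; exact add_le_add hu hv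

theorem ofReal_mul_mem_sector {r : ℝ} (hr : 0 ≤ r) (hu : u ∈ sector k) :
    (r : ℂ) * u ∈ sector k := by
  rw [mem_sector, norm_mul, norm_real, Real.norm_of_nonneg hr, re_ofReal_mul, mul_left_comm]
  exact mul_le_mul_of_nonneg_left hu hr

theorem inv_mem_sector (hu : u ∈ sector k) : u⁻¹ ∈ sector k := by
  rw [mem_sector, norm_inv, inv_re, normSq_eq_norm_sq, ← mul_div_assoc]
  rcases (norm_nonneg u).eq_or_lt with h | h
  · simp [← h]
  · rw [le_div_iff₀ (by positivity), sq, ← mul_assoc, inv_mul_cancel₀ h.ne', one_mul]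
    exact hu

theorem one_mem_sector (hk : 1 ≤ k) : (1 : ℂ) ∈ sector k := by
  simpa [mem_sector] using hk

theorem self_mem_sector {s : ℂ} (hs : 0 < s.re) : s ∈ sector (‖s‖ / s.re) := by
  rw [mem_sector, div_mul_cancel₀ _ hs.ne']

theorem re_nonneg_of_mem_sector (hk : 0 ≤ k) (hu : u ∈ sector k) : 0 ≤ u.re := by
  have := neg_abs_le u.re
  nlinarith [abs_re_le_norm u, mem_sector.1 hu]

end sector

theorem div_quadratic_mem_sector {s : ℂ} (hs : 0 < s.re) {a b c : ℝ} (ha : 0 ≤ a) (hb : 0 ≤ b)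
    (hc : 0 ≤ c) : s / ((a : ℂ) * s ^ 2 + (b : ℂ) * s + (c : ℂ)) ∈ sector (‖s‖ / s.re) := by
  have hs₀ : s ≠ 0 := fun h => by simp [h] at hs
  have hk : 1 ≤ ‖s‖ / s.re := (one_le_div₀ hs).2 (re_le_norm s)
  have hquot : ((a : ℂ) * s ^ 2 + (b : ℂ) * s + (c : ℂ)) / s = a * s + b * 1 + c * s⁻¹ := by
    field_simp
  rw [← inv_div _ s, hquot]
  have hself := self_mem_sector hs
  refine inv_mem_sector (add_mem_sector (add_mem_sector ?_ ?_) ?_)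
  · exact ofReal_mul_mem_sector ha hself
  · exact ofReal_mul_mem_sector hb (one_mem_sector hk)
  · exact ofReal_mul_mem_sector hc (inv_mem_sector hself)

theorem norm_div_sum_le_of_mem_sector {ι : Type*} [Fintype ι] {k : ℝ} (hk : 0 ≤ k) {ρ : ι → ℂ}
    (hρ : ∀ z, ρ z ∈ sector k) (y : ι) :
    ‖ρ y / ∑ z, ρ z‖ ≤ k * ((ρ y).re / ∑ z, (ρ z).re) := by
  have hre : ∀ z, 0 ≤ (ρ z).re := fun z => re_nonneg_of_mem_sector hk (hρ z)
  have hsum_le : ∑ z, (ρ z).re ≤ ‖∑ z, ρ z‖ := re_sum univ ρ ▸ re_le_norm _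
  rcases (sum_nonneg fun z _ => hre z).eq_or_lt with hzero | hpos
  · have hy : (ρ y).re = 0 := (sum_eq_zero_iff_of_nonneg fun z _ => hre z).1 hzero.symm y
      (mem_univ y)
    have : ρ y = 0 := norm_le_zero_iff.1 (by simpa [hy] using mem_sector.1 (hρ y))
    simp [this]
  · rw [norm_div, ← mul_div_assoc]
    exact div_le_div₀ (mul_nonneg hk (hre y)) (hρ y) hpos hsum_le

open Finset in
theorem abs_transition_le_tilde_general (s : ℂ) (hs : 0 < s.re) {ι : Type*} [Fintype ι]
    (L R D : ι → ℝ) (hL : ∀ y, 0 ≤ L y) (hR : ∀ y, 0 ≤ R y) (hD : ∀ y, 0 ≤ D y)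
    (y : ι) :
    ‖((s / ((L y : ℂ) * s ^ 2 + (R y : ℂ) * s + (D y : ℂ))) /
        ∑ z, s / ((L z : ℂ) * s ^ 2 + (R z : ℂ) * s + (D z : ℂ)))‖ ≤
      (‖s‖ / s.re) *
        ((s / ((L y : ℂ) * s ^ 2 + (R y : ℂ) * s + (D y : ℂ))).re /
          ∑ z, (s / ((L z : ℂ) * s ^ 2 + (R z : ℂ) * s + (D z : ℂ))).re) :=
  norm_div_sum_le_of_mem_sector (div_nonneg (norm_nonneg s) hs.le)
    (fun z => div_quadratic_mem_sector hs (hL z) (hR z) (hD z)) y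

open Finset in
/-- |p_s(x,y)| ≤ (|s|/Re s)·p̃_s(x,y), where
p̃_s(x,y) = Re ρ_s(x,y)/Σ_z Re ρ_s(x,z). -/
theorem abs_transition_le_tilde (s : ℂ) (hs : 0 < s.re) {ι : Type*} [Fintype ι]
    (L R D : ι → ℝ) (hL : ∀ y, 0 ≤ L y) (hR : ∀ y, 0 ≤ R y) (hD : ∀ y, 0 ≤ D y)
    (hsum : ∀ y, 0 < L y + R y + D y) (y : ι) :
    ‖((s / ((L y : ℂ) * s ^ 2 + (R y : ℂ) * s + (D y : ℂ))) /
        ∑ z, s / ((L z : ℂ) * s ^ 2 + (R z : ℂ) * s + (D z : ℂ)))‖ ≤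
      (‖s‖ / s.re) *
        ((s / ((L y : ℂ) * s ^ 2 + (R y : ℂ) * s + (D y : ℂ))).re /
          ∑ z, (s / ((L z : ℂ) * s ^ 2 + (R z : ℂ) * s + (D z : ℂ))).re) :=
  abs_transition_le_tilde_general s hs L R D hL hR hD y
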